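/- Let g be a simple Lie 2-algebra over F with toral rank MT(g) = 3 and standard maximal torus t (so the Cartan subalgebra h = c_g(t) is triangulable). Then dim(g_ξ) = dim(g_σ) for any nonzero ξ, σ ∈ t*. -/

import Mathlib

/-!
Let `t₁, t₂, t₃` be the toral basis, so that the weights are `ε₁ α + ε₂ β + ε₃ γ` with
`ε ∈ 𝔽₂³`, and let `θ` be the projection `g₀ = t ⊕ n → t`. For `x ∈ g_δ` the operator
`(ad x)² = ad x^[2]` acts on `g_σ` as `σ(θ x^[2])` plus a nilpotent operator; hence, if
`σ(θ x^[2]) ≠ 0`, then `ad x` maps `g_σ` injectively to `g_{σ+δ}` and back (applied to `x` itself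
this gives `δ(θ x^[2]) = 0`), so `dim g_σ = dim g_{σ+δ}`.

It remains to see that these moves connect the seven nonzero weights. Otherwise one class `C` has
at most three elements, so some nonzero `χ ∈ 𝔽₂³` is orthogonal to `σ + C` for `σ ∈ C`. The odd
part `g₁ = ⊕_{χ·η=1} g_η` of the resulting grading generates the ideal `g₁ + [g₁, g₁]`. It is not
`0`, since otherwise `χ₁ t₁ + χ₂ t₂ + χ₃ t₃` would be central; so it is `g`. As
`[x, y] = (x + y)^[2] - x^[2] - y^[2]`, the functional `σ ∘ θ ∘ (·)^[2]` cannot then vanish on all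
odd root vectors, which yields a move from `σ` to some `σ + η ∉ C` with `χ·η = 1`.
-/

/-- A 2-map on a Lie algebra over the field `F` (char 2 version of a restricted structure):
`(c • x)^[2] = c^2 • x^[2]`, `ad (x^[2]) = (ad x) ∘ (ad x)` and
`(x+y)^[2] = x^[2] + y^[2] + [x,y]`. -/
structure IsTwoMap (F : Type*) [Field F] {g : Type*} [LieRing g] [LieAlgebra F g]
    (p : g → g) : Prop where
  smul_pow : ∀ (c : F) (x : g), p (c • x) = (c ^ 2) • p x
  ad_pow : ∀ x y : g, ⁅p x, y⁆ = ⁅x, ⁅x, y⁆⁆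
  add_pow : ∀ x y : g, p (x + y) = p x + p y + ⁅x, y⁆

/-- An element is 2-nilpotent if some iterate of the 2-map annihilates it. -/
def IsTwoNilpotent {g : Type*} [Zero g] (p : g → g) (x : g) : Prop :=
  ∃ k : ℕ, p^[k] x = 0

/-- A torus of a Lie 2-algebra: a Lie subalgebra closed under the 2-map on which the
2-map is invertible (bijective). -/
def IsTorus (F : Type*) [Field F] {g : Type*} [LieRing g] [LieAlgebra F g]
    (p : g → g) (t : LieSubalgebra F g) : Prop :=
  (∀ x ∈ t, p x ∈ t) ∧ Set.BijOn p (t : Set g) (t : Set g)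

/-- A maximal torus of a Lie 2-algebra. -/
def IsMaxTorus (F : Type*) [Field F] {g : Type*} [LieRing g] [LieAlgebra F g]
    (p : g → g) (t : LieSubalgebra F g) : Prop :=
  IsTorus F p t ∧ ∀ s : LieSubalgebra F g, IsTorus F p s → t ≤ s → s = t

/-- The weight (root) space of a linear functional `lam` on a torus `t`:
`g_lam = {v | [x, v] = lam x • v for all x ∈ t}`. -/
def rootSpace {F : Type*} [Field F] {g : Type*} [LieRing g] [LieAlgebra F g]
    (t : LieSubalgebra F g) (lam : Module.Dual F t) : Submodule F g where
  carrier := {v | ∀ x : t, ⁅(x : g), v⁆ = lam x • v}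
  add_mem' := by
    intro a b ha hb x
    rw [lie_add, ha x, hb x, smul_add]
  zero_mem' := by
    intro x
    rw [lie_zero, smul_zero]
  smul_mem' := by
    intro c v hv x
    rw [lie_smul, hv x, smul_comm]

/-- The set of `t`-roots: nonzero functionals with nonzero root space. -/
def rootSet {F : Type*} [Field F] {g : Type*} [LieRing g] [LieAlgebra F g]
    (t : LieSubalgebra F g) : Set (Module.Dual F t) :=
  {lam | lam ≠ 0 ∧ rootSpace t lam ≠ ⊥}

/-- The subspace `N(σ, δ) = {x ∈ g_σ : [x, g_σ] ⊆ n and [[x, g_δ], g_{σ+δ}] ⊆ n}`,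
given as `Nspace n g_σ g_δ g_{σ+δ}`. -/
def Nspace {F : Type*} [Field F] {g : Type*} [LieRing g] [LieAlgebra F g]
    (n gs gd gsd : Submodule F g) : Submodule F g where
  carrier := {x | x ∈ gs ∧ (∀ y ∈ gs, ⁅x, y⁆ ∈ n) ∧ ∀ z ∈ gd, ∀ w ∈ gsd, ⁅⁅x, z⁆, w⁆ ∈ n}
  add_mem' := by
    intro a b ha hb
    obtain ⟨ha1, ha2, ha3⟩ := ha
    obtain ⟨hb1, hb2, hb3⟩ := hb
    refine ⟨gs.add_mem ha1 hb1, fun y hy => ?_, fun z hz w hw => ?_⟩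
    · rw [add_lie]
      exact n.add_mem (ha2 y hy) (hb2 y hy)
    · rw [add_lie, add_lie]
      exact n.add_mem (ha3 z hz w hw) (hb3 z hz w hw)
  zero_mem' := by
    refine ⟨gs.zero_mem, fun y hy => ?_, fun z hz w hw => ?_⟩
    · rw [zero_lie]; exact n.zero_mem
    · rw [zero_lie, zero_lie]; exact n.zero_mem
  smul_mem' := by
    intro c x hx
    obtain ⟨h1, h2, h3⟩ := hx
    refine ⟨gs.smul_mem c h1, fun y hy => ?_, fun z hz w hw => ?_⟩
    · rw [smul_lie]; exact n.smul_mem c (h2 y hy)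
    · rw [smul_lie, smul_lie]; exact n.smul_mem c (h3 z hz w hw)

lemma zmod_two_eq_zero_or_one : ∀ b : ZMod 2, b = 0 ∨ b = 1 := by decide

abbrev F2Cube : Type := ZMod 2 × ZMod 2 × ZMod 2

namespace F2Cube

def dot (x y : F2Cube) : ZMod 2 := x.1 * y.1 + x.2.1 * y.2.1 + x.2.2 * y.2.2

lemma dot_add_right (x a b : F2Cube) : dot x (a + b) = dot x a + dot x b := by
  simp only [dot, Prod.fst_add, Prod.snd_add]
  ring

lemma add_self (a : F2Cube) : a + a = 0 := by
  revert a; decide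

lemma exists_ne_zero_dot_eq_zero : ∀ d₁ d₂ : F2Cube, ∃ χ ≠ 0, dot χ d₁ = 0 ∧ dot χ d₂ = 0 := by
  decide

lemma exists_dot_eq_one : ∀ {χ : F2Cube}, χ ≠ 0 → ∃ η, dot χ η = 1 := by
  decide

lemma exists_dot_add_eq_zero_of_card_le_three {U : Finset F2Cube} (hU : U.card ≤ 3) {σ : F2Cube}
    (hσ : σ ∈ U) : ∃ χ ≠ 0, ∀ μ ∈ U, dot χ (σ + μ) = 0 := by
  classical
  obtain ⟨a, b, hab⟩ : ∃ a b, U ⊆ {σ, a, b} := by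
    have h2 : (U.erase σ).card ≤ 2 := by rw [Finset.card_erase_of_mem hσ]; omega
    rw [← Finset.insert_erase hσ]
    interval_cases h : (U.erase σ).card
    · exact ⟨σ, σ, by simp [Finset.card_eq_zero.mp h]⟩
    · obtain ⟨a, ha⟩ := Finset.card_eq_one.mp h
      exact ⟨a, a, by simp [ha]⟩
    · obtain ⟨a, b, -, hab⟩ := Finset.card_eq_two.mp h
      exact ⟨a, b, by simp [hab]⟩
  obtain ⟨χ, hχ, ha, hb⟩ := exists_ne_zero_dot_eq_zero (σ + a) (σ + b)
  refine ⟨χ, hχ, fun μ hμ => ?_⟩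
  rcases Finset.mem_insert.mp (hab hμ) with rfl | hμ
  · rw [add_self]; simp [dot]
  · rcases Finset.mem_insert.mp hμ with rfl | hμ
    · exact ha
    · rw [Finset.mem_singleton.mp hμ]; exact hb

lemma eq_of_forall_exists_dot_eq_one {β : Type*} {f : F2Cube → β}
    (h : ∀ σ ≠ 0, ∀ χ ≠ 0, ∃ η, dot χ η = 1 ∧ σ + η ≠ 0 ∧ f (σ + η) = f σ)
    {a b : F2Cube} (ha : a ≠ 0) (hb : b ≠ 0) : f a = f b := by
  classical
  have no_small_class : ∀ U : Finset F2Cube, U.card ≤ 3 → ∀ σ ∈ U, σ ≠ 0 →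
      (∀ η, σ + η ≠ 0 → f (σ + η) = f σ → σ + η ∈ U) → False := by
    intro U hU σ hσU hσ hclosed
    obtain ⟨χ, hχ, hperp⟩ := exists_dot_add_eq_zero_of_card_le_three hU hσU
    obtain ⟨η, hη, hση, hf⟩ := h σ hσ χ hχ
    have := hperp _ (hclosed η hση hf)
    rw [← add_assoc, add_self, zero_add, hη] at this
    exact one_ne_zero this
  by_contra hab
  set N : Finset F2Cube := Finset.univ.erase 0
  have hN : N.card = 7 := by rw [Finset.card_erase_of_mem (Finset.mem_univ _)]; rfl
  have hsplit := Finset.card_filter_add_card_filter_not (s := N) (fun μ => f μ = f a)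
  rcases le_or_gt (N.filter fun μ => f μ = f a).card 3 with hS | hS
  · refine no_small_class _ hS a (by simp [N, ha]) ha fun η hη hf => ?_
    simp [N, hη, hf]
  · refine no_small_class (N.filter fun μ => ¬f μ = f a) (by omega) b
      (by simp [N, hb, Ne.symm hab]) hb fun η hη hf => ?_
    simp only [N, Finset.mem_filter, Finset.mem_erase, Finset.mem_univ]
    exact ⟨⟨hη, trivial⟩, hf ▸ Ne.symm hab⟩

end F2Cube

lemma add_self_eq_zero_of_charTwo (F : Type*) [Field F] [CharP F 2] {M : Type*} [AddCommGroup M]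
    [Module F M] (x : M) : x + x = 0 := by
  rw [← two_smul F x, CharTwo.two_eq_zero, zero_smul]

section TwoMap

variable {F : Type*} [Field F] {g : Type*} [LieRing g] [LieAlgebra F g] {p : g → g}

lemma lie_mem_rootSpace_add (t : LieSubalgebra F g) {lam mu : Module.Dual F t} {v w : g}
    (hv : v ∈ rootSpace t lam) (hw : w ∈ rootSpace t mu) : ⁅v, w⁆ ∈ rootSpace t (lam + mu) := by
  intro s
  rw [leibniz_lie, hv s, hw s, smul_lie, lie_smul, LinearMap.add_apply, add_smul]

namespace IsTwoMap

variable (hp : IsTwoMap F p)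
include hp

lemma map_zero : p 0 = 0 := by
  simpa using hp.smul_pow 0 0

lemma ad_map (x : g) : LieAlgebra.ad F g (p x) = LieAlgebra.ad F g x ^ 2 := by
  ext y
  exact hp.ad_pow x y

lemma isNilpotent_ad {x : g} (hx : IsTwoNilpotent p x) : IsNilpotent (LieAlgebra.ad F g x) := by
  obtain ⟨k, hk⟩ := hx
  have ad_iterate : ∀ j, LieAlgebra.ad F g (p^[j] x) = LieAlgebra.ad F g x ^ 2 ^ j := by
    intro j
    induction j with
    | zero => simp
    | succ j ih => rw [Function.iterate_succ_apply', hp.ad_map, ih, ← pow_mul, ← pow_succ]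
  exact ⟨2 ^ k, by rw [← ad_iterate, hk, _root_.map_zero]⟩

lemma map_mem_rootSpace_zero {t : LieSubalgebra F g} {lam : Module.Dual F t} {x : g}
    (hx : x ∈ rootSpace t lam) : p x ∈ rootSpace t 0 := by
  intro s
  rw [LinearMap.zero_apply, zero_smul, ← lie_skew, hp.ad_pow, ← lie_skew x (s : g), hx s, lie_neg,
    lie_smul, lie_self, smul_zero, neg_zero, neg_zero]

end IsTwoMap

end TwoMap

lemma Submodule.exists_linearMap_sub_mem_of_eq_sup {F : Type*} [Field F] {M : Type*}
    [AddCommGroup M] [Module F M] {A B V : Submodule F M} (hV : V = A ⊔ B) (hAB : Disjoint A B) :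
    ∃ θ : M →ₗ[F] A, (∀ a : A, θ a = a) ∧ ∀ v ∈ V, v - θ v ∈ B := by
  obtain ⟨W, hW⟩ := Submodule.exists_isCompl V
  have hc : IsCompl A (B ⊔ W) := hAB.isCompl_sup_right_of_isCompl_sup_left (hV ▸ hW)
  refine ⟨A.projectionOnto _ hc, A.projectionOnto_apply_left hc, fun v hv => ?_⟩
  obtain ⟨b, hb, w, hw, hbw⟩ := Submodule.mem_sup.mp (A.sub_projection_mem hc v)
  have hwV : w ∈ V := by
    rw [show w = v - A.projection _ hc v - b by rw [← hbw]; abel]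
    refine sub_mem (sub_mem hv ?_) ?_
    · exact hV ▸ Submodule.mem_sup_left (A.projection_apply_mem hc v)
    · exact hV ▸ Submodule.mem_sup_right hb
  rw [Submodule.coe_projectionOnto_apply, ← hbw, (Submodule.disjoint_def.mp hW.disjoint) w hwV hw,
    add_zero]
  exact hb

section ToralPart

variable {F : Type*} [Field F] {g : Type*} [LieRing g] [LieAlgebra F g] {p : g → g}
  {t : LieSubalgebra F g} {θ : g →ₗ[F] t}
  (hp : IsTwoMap F p) (hθ : ∀ v ∈ rootSpace t 0, IsTwoNilpotent p (v - θ v))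
include hp hθ

lemma eq_zero_of_lie_lie_eq_zero {lam mu : Module.Dual F t} {x v : g} (hx : x ∈ rootSpace t mu)
    (hv : v ∈ rootSpace t lam) (hlam : lam (θ (p x)) ≠ 0) (hxxv : ⁅x, ⁅x, v⁆⁆ = 0) : v = 0 := by
  set m := p x - θ (p x)
  have hnil : IsNilpotent (LieAlgebra.ad F g m) :=
    hp.isNilpotent_ad (hθ _ (hp.map_mem_rootSpace_zero hx))
  have hunit : IsUnit (lam (θ (p x)) • 1 + LieAlgebra.ad F g m) :=
    hnil.isUnit_add_left_of_commute (isUnit_one.smul hlam.isUnit.unit)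
      ((Commute.one_right _).smul_right _)
  have hxxv' : ⁅x, ⁅x, v⁆⁆ = lam (θ (p x)) • v + ⁅m, v⁆ := by
    rw [← hp.ad_pow, ← hv (θ (p x)), ← add_lie, add_sub_cancel]
  apply (Module.End.isUnit_iff _).mp hunit |>.injective
  rw [_root_.map_zero, ← hxxv, hxxv']
  rfl

lemma apply_map_eq_zero {lam : Module.Dual F t} {x : g} (hx : x ∈ rootSpace t lam) :
    lam (θ (p x)) = 0 := by
  by_contra hlam
  have hx0 := eq_zero_of_lie_lie_eq_zero hp hθ hx hx hlam (by rw [lie_self, lie_zero])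
  rw [hx0, hp.map_zero, _root_.map_zero, _root_.map_zero] at hlam
  exact hlam rfl

variable [FiniteDimensional F g]

lemma finrank_rootSpace_le_of_apply_map_ne_zero {δ σ : Module.Dual F t} {x : g}
    (hx : x ∈ rootSpace t δ) (hσ : σ (θ (p x)) ≠ 0) :
    Module.finrank F (rootSpace t σ) ≤ Module.finrank F (rootSpace t (σ + δ)) := by
  have hmaps : ∀ v ∈ rootSpace t σ, LieAlgebra.ad F g x v ∈ rootSpace t (σ + δ) :=
    fun v hv => add_comm δ σ ▸ lie_mem_rootSpace_add t hx hv
  refine LinearMap.finrank_le_finrank_of_injective (f := (LieAlgebra.ad F g x).restrict hmaps) ?_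
  rw [← LinearMap.ker_eq_bot, Submodule.eq_bot_iff]
  intro v hv
  have hxv : ⁅x, (v : g)⁆ = 0 := congrArg Subtype.val hv
  exact Subtype.ext <| eq_zero_of_lie_lie_eq_zero hp hθ hx v.2 hσ (by rw [hxv, lie_zero])

lemma finrank_rootSpace_eq_of_apply_map_ne_zero [CharP F 2] {δ σ : Module.Dual F t} {x : g}
    (hx : x ∈ rootSpace t δ) (hσ : σ (θ (p x)) ≠ 0) :
    Module.finrank F (rootSpace t σ) = Module.finrank F (rootSpace t (σ + δ)) := by
  have hσδ : (σ + δ) (θ (p x)) ≠ 0 := by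
    rwa [LinearMap.add_apply, apply_map_eq_zero hp hθ hx, add_zero]
  refine (finrank_rootSpace_le_of_apply_map_ne_zero hp hθ hx hσ).antisymm ?_
  have := finrank_rootSpace_le_of_apply_map_ne_zero hp hθ hx hσδ
  rwa [add_assoc, add_self_eq_zero_of_charTwo F δ, add_zero] at this

end ToralPart

section ToralBasis

variable {F : Type*} [Field F] {g : Type*} [LieRing g] [LieAlgebra F g]

structure IsToralBasis (p : g → g) {t : LieSubalgebra F g} (t₁ t₂ t₃ : t)
    (α β γ : Module.Dual F t) : Prop where
  lie_eq_zero : ∀ x y : t, ⁅(x : g), (y : g)⁆ = 0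
  map_t₁ : p t₁ = t₁
  map_t₂ : p t₂ = t₂
  map_t₃ : p t₃ = t₃
  span_eq_top : Submodule.span F ({t₁, t₂, t₃} : Set t) = ⊤
  apply_α : α t₁ = 1 ∧ α t₂ = 0 ∧ α t₃ = 0
  apply_β : β t₁ = 0 ∧ β t₂ = 1 ∧ β t₃ = 0
  apply_γ : γ t₁ = 0 ∧ γ t₂ = 0 ∧ γ t₃ = 1

variable {t : LieSubalgebra F g}

def weight (α β γ : Module.Dual F t) (ε : F2Cube) : Module.Dual F t :=
  (ZMod.cast ε.1 : F) • α + (ZMod.cast ε.2.1 : F) • β + (ZMod.cast ε.2.2 : F) • γ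

lemma mem_rootSpace_of_span_eq_top {S : Set t} (hS : Submodule.span F S = ⊤)
    {lam : Module.Dual F t} {v : g} (h : ∀ x ∈ S, ⁅(x : g), v⁆ = lam x • v) :
    v ∈ rootSpace t lam := by
  intro x
  induction (hS ▸ Submodule.mem_top : x ∈ Submodule.span F S) using Submodule.span_induction with
  | mem x hx => exact h x hx
  | zero => simp
  | add x y _ _ hx hy => simp [add_lie, hx, hy, add_smul]
  | smul c x _ hx => simp [smul_lie, hx, smul_smul]

variable {p : g → g} {t₁ t₂ t₃ : t} {α β γ : Module.Dual F t}

lemma weight_add [CharP F 2] (ε ε' : F2Cube) :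
    weight α β γ (ε + ε') = weight α β γ ε + weight α β γ ε' := by
  simp only [weight, Prod.fst_add, Prod.snd_add, ZMod.cast_add', add_smul]
  abel

lemma weight_zero : weight α β γ 0 = 0 := by
  simp [weight]

namespace IsToralBasis

variable (hT : IsToralBasis p t₁ t₂ t₃ α β γ)
include hT

lemma mem_rootSpace_weight_zero (s : t) : (s : g) ∈ rootSpace t (weight α β γ 0) := by
  intro x
  rw [hT.lie_eq_zero, weight_zero, LinearMap.zero_apply, zero_smul]

lemma weight_apply_t₁ (ε : F2Cube) : weight α β γ ε t₁ = ZMod.cast ε.1 := by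
  simp [weight, hT.apply_α.1, hT.apply_β.1, hT.apply_γ.1]

lemma weight_apply_t₂ (ε : F2Cube) : weight α β γ ε t₂ = ZMod.cast ε.2.1 := by
  simp [weight, hT.apply_α.2.1, hT.apply_β.2.1, hT.apply_γ.2.1]

lemma weight_apply_t₃ (ε : F2Cube) : weight α β γ ε t₃ = ZMod.cast ε.2.2 := by
  simp [weight, hT.apply_α.2.2, hT.apply_β.2.2, hT.apply_γ.2.2]

lemma mem_rootSpace_weight_iff {ε : F2Cube} {v : g} :
    v ∈ rootSpace t (weight α β γ ε) ↔
      ⁅(t₁ : g), v⁆ = (ZMod.cast ε.1 : F) • v ∧ ⁅(t₂ : g), v⁆ = (ZMod.cast ε.2.1 : F) • v ∧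
        ⁅(t₃ : g), v⁆ = (ZMod.cast ε.2.2 : F) • v := by
  refine ⟨fun hv => ?_, fun ⟨h₁, h₂, h₃⟩ => mem_rootSpace_of_span_eq_top hT.span_eq_top ?_⟩
  · rw [← hT.weight_apply_t₁, ← hT.weight_apply_t₂, ← hT.weight_apply_t₃]
    exact ⟨hv t₁, hv t₂, hv t₃⟩
  · rintro x (rfl | rfl | rfl)
    · rwa [hT.weight_apply_t₁]
    · rwa [hT.weight_apply_t₂]
    · rwa [hT.weight_apply_t₃]

lemma weight_ne_zero [CharP F 2] {ε : F2Cube} (hε : ε ≠ 0) : weight α β γ ε ≠ 0 := by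
  intro h
  have hcast : ∀ b : ZMod 2, (ZMod.cast b : F) = 0 → b = 0 := fun b hb =>
    (ZMod.castHom dvd_rfl F).injective (by simpa using hb)
  apply hε
  refine Prod.ext (hcast _ ?_) (Prod.ext (hcast _ ?_) (hcast _ ?_))
  · rw [← hT.weight_apply_t₁, h]; rfl
  · rw [← hT.weight_apply_t₂, h]; rfl
  · rw [← hT.weight_apply_t₃, h]; rfl

end IsToralBasis

end ToralBasis

section EigenProj

variable {F : Type*} [Field F] {M : Type*} [AddCommGroup M] [Module F M]

def eigenProj (b : ZMod 2) (E : Module.End F M) : Module.End F M :=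
  if b = 0 then 1 - E else E

lemma Commute.eigenProj_right {A E : Module.End F M} (h : Commute A E) (b : ZMod 2) :
    Commute A (eigenProj b E) := by
  unfold eigenProj
  split_ifs
  exacts [(Commute.one_right A).sub_right h, h]

lemma sum_eigenProj (E : Module.End F M) : ∑ b : ZMod 2, eigenProj b E = 1 := by
  rw [show (Finset.univ : Finset (ZMod 2)) = {0, 1} by decide, Finset.sum_pair (by decide)]
  simp [eigenProj]

variable [CharP F 2]

lemma mul_eigenProj {E : Module.End F M} (hE : IsIdempotentElem E) (b : ZMod 2) :
    E * eigenProj b E = (ZMod.cast b : F) • eigenProj b E := by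
  obtain rfl | rfl := zmod_two_eq_zero_or_one b
  · simp [eigenProj, mul_sub, hE.eq]
  · simp [eigenProj, hE.eq]

lemma eigenProj_apply_of_apply_eq {E : Module.End F M} {c : ZMod 2} {v : M}
    (hv : E v = (ZMod.cast c : F) • v) (b : ZMod 2) :
    eigenProj b E v = if c = b then v else 0 := by
  obtain rfl | rfl := zmod_two_eq_zero_or_one b <;>
    obtain rfl | rfl := zmod_two_eq_zero_or_one c <;> simp_all [eigenProj]

end EigenProj

lemma IsTwoMap.isIdempotentElem_ad {F : Type*} [Field F] {g : Type*} [LieRing g] [LieAlgebra F g]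
    {p : g → g} (hp : IsTwoMap F p) {x : g} (hx : p x = x) :
    IsIdempotentElem (LieAlgebra.ad F g x) := by
  rw [IsIdempotentElem, ← sq, ← hp.ad_map, hx]

section WeightProj

variable {F : Type*} [Field F] {g : Type*} [LieRing g] [LieAlgebra F g]
  {p : g → g} {t : LieSubalgebra F g} {t₁ t₂ t₃ : t} {α β γ : Module.Dual F t}

def weightProj (t₁ t₂ t₃ : t) (ε : F2Cube) : Module.End F g :=
  eigenProj ε.1 (LieAlgebra.ad F g t₁) * eigenProj ε.2.1 (LieAlgebra.ad F g t₂) *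
    eigenProj ε.2.2 (LieAlgebra.ad F g t₃)

lemma sum_weightProj (t₁ t₂ t₃ : t) : ∑ ε, weightProj t₁ t₂ t₃ ε = 1 := by
  simp only [weightProj, Fintype.sum_prod_type, ← Finset.mul_sum, sum_eigenProj, mul_one]

lemma sum_weightProj_apply (t₁ t₂ t₃ : t) (z : g) : ∑ ε, weightProj t₁ t₂ t₃ ε z = z := by
  rw [← LinearMap.sum_apply, sum_weightProj, Module.End.one_apply]

namespace IsToralBasis

variable (hT : IsToralBasis p t₁ t₂ t₃ α β γ)
include hT

lemma commute_ad (x y : t) : Commute (LieAlgebra.ad F g x) (LieAlgebra.ad F g y) := by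
  ext z
  change ⁅(x : g), ⁅(y : g), z⁆⁆ = ⁅(y : g), ⁅(x : g), z⁆⁆
  rw [leibniz_lie, hT.lie_eq_zero, zero_lie, zero_add]

variable [CharP F 2]

lemma weightProj_apply_mem (hp : IsTwoMap F p) (ε : F2Cube) (z : g) :
    weightProj t₁ t₂ t₃ ε z ∈ rootSpace t (weight α β γ ε) := by
  set P₁ := eigenProj ε.1 (LieAlgebra.ad F g t₁)
  set P₂ := eigenProj ε.2.1 (LieAlgebra.ad F g t₂)
  set P₃ := eigenProj ε.2.2 (LieAlgebra.ad F g t₃)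
  have eigen : ∀ (x : g) (c : F), LieAlgebra.ad F g x * (P₁ * P₂ * P₃) = c • (P₁ * P₂ * P₃) →
      ⁅x, weightProj t₁ t₂ t₃ ε z⁆ = c • weightProj t₁ t₂ t₃ ε z := fun x c h => by
    rw [← LieAlgebra.ad_apply F, weightProj, ← Module.End.mul_apply, h]
    rfl
  rw [hT.mem_rootSpace_weight_iff]
  refine ⟨eigen _ _ ?_, eigen _ _ ?_, eigen _ _ ?_⟩
  · rw [← mul_assoc, ← mul_assoc, mul_eigenProj (hp.isIdempotentElem_ad hT.map_t₁),
      smul_mul_assoc, smul_mul_assoc]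
  · rw [← mul_assoc, ← mul_assoc, ((hT.commute_ad t₂ t₁).eigenProj_right ε.1).eq, mul_assoc P₁,
      mul_eigenProj (hp.isIdempotentElem_ad hT.map_t₂), mul_smul_comm, smul_mul_assoc]
  · rw [← mul_assoc, (((hT.commute_ad t₃ t₁).eigenProj_right ε.1).mul_right
      ((hT.commute_ad t₃ t₂).eigenProj_right ε.2.1)).eq, mul_assoc,
      mul_eigenProj (hp.isIdempotentElem_ad hT.map_t₃), mul_smul_comm]

lemma weightProj_apply_of_mem {μ : F2Cube} {v : g} (hv : v ∈ rootSpace t (weight α β γ μ))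
    (ε : F2Cube) : weightProj t₁ t₂ t₃ ε v = if μ = ε then v else 0 := by
  obtain ⟨h₁, h₂, h₃⟩ := hT.mem_rootSpace_weight_iff.mp hv
  simp only [weightProj, Module.End.mul_apply, apply_ite, _root_.map_zero,
    eigenProj_apply_of_apply_eq (E := LieAlgebra.ad F g t₁) h₁,
    eigenProj_apply_of_apply_eq (E := LieAlgebra.ad F g t₂) h₂,
    eigenProj_apply_of_apply_eq (E := LieAlgebra.ad F g t₃) h₃]
  split_ifs <;> simp_all [Prod.ext_iff]

end IsToralBasis

end WeightProj

section Grading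

variable {F : Type*} [Field F] {g : Type*} [LieRing g] [LieAlgebra F g]

lemma lie_mem_of_mem_iSup {ι κ : Type*} {N : ι → Submodule F g} {M : κ → Submodule F g}
    {S : Submodule F g} (h : ∀ i j, ∀ x ∈ N i, ∀ y ∈ M j, ⁅x, y⁆ ∈ S) {x y : g}
    (hx : x ∈ ⨆ i, N i) (hy : y ∈ ⨆ j, M j) : ⁅x, y⁆ ∈ S := by
  induction hx using Submodule.iSup_induction' with
  | mem i x hx =>
    induction hy using Submodule.iSup_induction' with
    | mem j y hy => exact h i j x hx y hy
    | zero => simp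
    | add y y' _ _ hy hy' => rw [lie_add]; exact S.add_mem hy hy'
  | zero => simp
  | add x x' _ _ hx hx' => rw [add_lie]; exact S.add_mem hx hx'

variable {t : LieSubalgebra F g} {α β γ : Module.Dual F t} {χ : F2Cube}

variable (α β γ) in
def paritySpace (χ : F2Cube) (c : ZMod 2) : Submodule F g :=
  ⨆ η : {η : F2Cube // F2Cube.dot χ η = c}, rootSpace t (weight α β γ η)

lemma mem_paritySpace {c : ZMod 2} {η : F2Cube} (hη : F2Cube.dot χ η = c) {v : g}
    (hv : v ∈ rootSpace t (weight α β γ η)) : v ∈ paritySpace α β γ χ c :=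
  Submodule.mem_iSup_of_mem (⟨η, hη⟩ : {η // F2Cube.dot χ η = c}) hv

variable [CharP F 2]

lemma lie_mem_paritySpace {c d : ZMod 2} {x y : g} (hx : x ∈ paritySpace α β γ χ c)
    (hy : y ∈ paritySpace α β γ χ d) : ⁅x, y⁆ ∈ paritySpace α β γ χ (c + d) := by
  refine lie_mem_of_mem_iSup (fun ⟨η, hη⟩ ⟨η', hη'⟩ x hx y hy => ?_) hx hy
  refine mem_paritySpace (η := η + η') (by rw [F2Cube.dot_add_right, hη, hη']) ?_
  rw [weight_add]
  exact lie_mem_rootSpace_add t hx hy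

variable (α β γ) in
def oddClosure (χ : F2Cube) : Submodule F g :=
  paritySpace α β γ χ 1 ⊔
    Submodule.span F (Set.image2 (⁅·, ·⁆) (paritySpace α β γ χ 1 : Set g) (paritySpace α β γ χ 1))

lemma lie_mem_oddClosure_of_mem_paritySpace {c : ZMod 2} {v w : g}
    (hv : v ∈ paritySpace α β γ χ c) (hw : w ∈ oddClosure α β γ χ) :
    ⁅v, w⁆ ∈ oddClosure α β γ χ := by
  have lie_span : (∀ x ∈ paritySpace α β γ χ 1, ∀ y ∈ paritySpace α β γ χ 1,
      ⁅v, ⁅x, y⁆⁆ ∈ oddClosure α β γ χ) →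
      ∀ u ∈ Submodule.span F (Set.image2 (⁅·, ·⁆) (paritySpace α β γ χ 1 : Set g)
        (paritySpace α β γ χ 1)), ⁅v, u⁆ ∈ oddClosure α β γ χ := fun h u hu =>
    (Submodule.span_le (p := (oddClosure α β γ χ).comap (LieAlgebra.ad F g v))).mpr
      (by rintro _ ⟨x, hx, y, hy, rfl⟩; exact h x hx y hy) hu
  have bracket_mem : ∀ x ∈ paritySpace α β γ χ 1, ∀ y ∈ paritySpace α β γ χ 1,
      ⁅x, y⁆ ∈ oddClosure α β γ χ := fun x hx y hy =>
    Submodule.mem_sup_right (Submodule.subset_span (Set.mem_image2_of_mem hx hy))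
  obtain ⟨w₁, hw₁, w₂, hw₂, rfl⟩ := Submodule.mem_sup.mp hw
  rw [lie_add]
  obtain rfl | rfl := zmod_two_eq_zero_or_one c
  · refine add_mem (Submodule.mem_sup_left (zero_add (1 : ZMod 2) ▸ lie_mem_paritySpace hv hw₁))
      (lie_span (fun x hx y hy => ?_) w₂ hw₂)
    rw [leibniz_lie]
    exact add_mem (bracket_mem _ (zero_add (1 : ZMod 2) ▸ lie_mem_paritySpace hv hx) _ hy)
      (bracket_mem _ hx _ (zero_add (1 : ZMod 2) ▸ lie_mem_paritySpace hv hy))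
  · refine add_mem (bracket_mem _ hv _ hw₁) (lie_span (fun x hx y hy => ?_) w₂ hw₂)
    have hxy : ⁅x, y⁆ ∈ paritySpace α β γ χ 0 := (by decide : (1 + 1 : ZMod 2) = 0) ▸
      lie_mem_paritySpace hx hy
    exact Submodule.mem_sup_left (add_zero (1 : ZMod 2) ▸ lie_mem_paritySpace hv hxy)

end Grading

section Simplicity

variable {F : Type*} [Field F] {g : Type*} [LieRing g] [LieAlgebra F g]

lemma eq_zero_of_forall_lie_eq_zero (hsimple : ∀ I : LieIdeal F g, I = ⊥ ∨ I = ⊤)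
    (hdim1 : Module.finrank F g ≠ 1) {s : g} (hs : ∀ z : g, ⁅z, s⁆ = 0) : s = 0 := by
  by_contra hs0
  let K : LieIdeal F g :=
    { Submodule.span F {s} with
      lie_mem := fun {z _} hm => by
        obtain ⟨c, rfl⟩ := Submodule.mem_span_singleton.mp hm
        rw [lie_smul, hs z, smul_zero]
        exact zero_mem (Submodule.span F {s}) }
  rcases hsimple K with hK | hK
  · have hsK : s ∈ K := Submodule.mem_span_singleton_self s
    rw [hK, LieSubmodule.mem_bot] at hsK
    exact hs0 hsK
  · apply hdim1
    rw [← finrank_top, ← (LieSubmodule.toSubmodule_eq_top K).mpr hK]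
    exact finrank_span_singleton hs0

end Simplicity

section MainArgument

variable {F : Type*} [Field F] [CharP F 2] {g : Type*} [LieRing g] [LieAlgebra F g]
  {p : g → g} {t : LieSubalgebra F g} {t₁ t₂ t₃ : t} {α β γ : Module.Dual F t} {χ : F2Cube}

def torusElement (t₁ t₂ t₃ : t) (χ : F2Cube) : t :=
  (ZMod.cast χ.1 : F) • t₁ + (ZMod.cast χ.2.1 : F) • t₂ + (ZMod.cast χ.2.2 : F) • t₃

namespace IsToralBasis

variable (hT : IsToralBasis p t₁ t₂ t₃ α β γ) (hp : IsTwoMap F p)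
include hT

lemma weight_apply_torusElement (ε χ : F2Cube) :
    weight α β γ ε (torusElement t₁ t₂ t₃ χ) = ZMod.cast (F2Cube.dot χ ε) := by
  simp only [torusElement, map_add, map_smul, hT.weight_apply_t₁, hT.weight_apply_t₂,
    hT.weight_apply_t₃, F2Cube.dot, ZMod.cast_add', ZMod.cast_mul', smul_eq_mul]

lemma torusElement_ne_zero (hχ : χ ≠ 0) : torusElement t₁ t₂ t₃ χ ≠ 0 := by
  obtain ⟨η, hη⟩ := F2Cube.exists_dot_eq_one hχ
  intro h
  have := hT.weight_apply_torusElement η χ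
  rw [h, _root_.map_zero, hη, ZMod.cast_one'] at this
  exact zero_ne_one this

include hp

lemma lie_mem_oddClosure (z : g) {w : g} (hw : w ∈ oddClosure α β γ χ) :
    ⁅z, w⁆ ∈ oddClosure α β γ χ := by
  rw [← sum_weightProj_apply t₁ t₂ t₃ z, sum_lie]
  exact Submodule.sum_mem _ fun ε _ =>
    lie_mem_oddClosure_of_mem_paritySpace (mem_paritySpace rfl (hT.weightProj_apply_mem hp ε z)) hw

lemma lie_torusElement_eq_zero (hodd : ∀ v ∈ paritySpace α β γ χ 1, v = 0) (z : g) :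
    ⁅z, (torusElement t₁ t₂ t₃ χ : g)⁆ = 0 := by
  rw [← sum_weightProj_apply t₁ t₂ t₃ z, sum_lie]
  refine Finset.sum_eq_zero fun ε _ => ?_
  have hmem := hT.weightProj_apply_mem hp ε z
  obtain h | h := zmod_two_eq_zero_or_one (F2Cube.dot χ ε)
  · rw [← lie_skew, hmem, hT.weight_apply_torusElement, h, ZMod.cast_zero, zero_smul, neg_zero]
  · rw [hodd _ (mem_paritySpace h hmem), zero_lie]

lemma apply_weightProj_zero_eq_zero_of_mem_oddClosure {θ : g →ₗ[F] t} {ψ : Module.Dual F t}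
    (hψ : ∀ η, F2Cube.dot χ η = 1 → ∀ x ∈ rootSpace t (weight α β γ η), ψ (θ (p x)) = 0)
    {w : g} (hw : w ∈ oddClosure α β γ χ) : ψ (θ (weightProj t₁ t₂ t₃ 0 w)) = 0 := by
  set Φ : Module.Dual F g := ψ ∘ₗ θ ∘ₗ weightProj t₁ t₂ t₃ 0
  have kill : ∀ η ≠ 0, ∀ v ∈ rootSpace t (weight α β γ η), v ∈ LinearMap.ker Φ :=
    fun η hη v hv => by simp [Φ, hT.weightProj_apply_of_mem hv, hη]
  suffices oddClosure α β γ χ ≤ LinearMap.ker Φ from this hw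
  refine sup_le (iSup_le fun ⟨η, hη⟩ => ?_) (Submodule.span_le.mpr ?_)
  · exact fun v hv => kill η (by rintro rfl; simp [F2Cube.dot] at hη) v hv
  rintro _ ⟨x, hx, y, hy, rfl⟩
  refine lie_mem_of_mem_iSup (fun ⟨η, hη⟩ ⟨η', hη'⟩ x hx y hy => ?_) hx hy
  have hxy := lie_mem_rootSpace_add t hx hy
  rw [← weight_add] at hxy
  by_cases hηη' : η = η'
  · subst hηη'
    rw [F2Cube.add_self] at hxy
    have hlie : ⁅x, y⁆ = p (x + y) - p x - p y := by rw [hp.add_pow]; abel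
    simp only [Φ, LinearMap.mem_ker, LinearMap.comp_apply]
    rw [hT.weightProj_apply_of_mem hxy, if_pos rfl, hlie, map_sub, map_sub, map_sub, map_sub,
      hψ η hη x hx, hψ η hη y hy, hψ η hη _ (add_mem hx hy), sub_zero, sub_zero]
  · exact kill _ (fun h => hηη' (add_left_cancel (h.trans (F2Cube.add_self η).symm)).symm) _ hxy

lemma exists_apply_map_ne_zero (hsimple : ∀ I : LieIdeal F g, I = ⊥ ∨ I = ⊤)
    (hdim1 : Module.finrank F g ≠ 1) {θ : g →ₗ[F] t} (hθt : ∀ s : t, θ s = s) (hχ : χ ≠ 0)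
    {ψ : Module.Dual F t} (hψ : ψ ≠ 0) :
    ∃ η, F2Cube.dot χ η = 1 ∧ ∃ x ∈ rootSpace t (weight α β γ η), ψ (θ (p x)) ≠ 0 := by
  by_contra! hcon
  let J : LieIdeal F g :=
    { oddClosure α β γ χ with lie_mem := fun {z _} hw => hT.lie_mem_oddClosure hp z hw }
  rcases hsimple J with hJ | hJ
  · have hodd : ∀ v ∈ paritySpace α β γ χ 1, v = 0 := fun v hv => by
      have hvJ : v ∈ J := Submodule.mem_sup_left hv
      rwa [hJ, LieSubmodule.mem_bot] at hvJ
    exact hT.torusElement_ne_zero hχ <| Subtype.ext <|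
      eq_zero_of_forall_lie_eq_zero hsimple hdim1 (hT.lie_torusElement_eq_zero hp hodd)
  · refine hψ (LinearMap.ext fun s => ?_)
    have hs : (s : g) ∈ oddClosure α β γ χ := (hJ ▸ LieSubmodule.mem_top (s : g) : (s : g) ∈ J)
    have := hT.apply_weightProj_zero_eq_zero_of_mem_oddClosure hp hcon hs
    rwa [hT.weightProj_apply_of_mem (hT.mem_rootSpace_weight_zero s), if_pos rfl, hθt] at this

end IsToralBasis

end MainArgument

theorem IsToralBasis.finrank_rootSpace_weight_eq {F : Type*} [Field F] [CharP F 2] {g : Type*}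
    [LieRing g] [LieAlgebra F g] [FiniteDimensional F g] {p : g → g} {t : LieSubalgebra F g}
    {t₁ t₂ t₃ : t} {α β γ : Module.Dual F t} (hT : IsToralBasis p t₁ t₂ t₃ α β γ)
    (hp : IsTwoMap F p) (hsimple : ∀ I : LieIdeal F g, I = ⊥ ∨ I = ⊤)
    (hdim1 : Module.finrank F g ≠ 1) {θ : g →ₗ[F] t} (hθt : ∀ s : t, θ s = s)
    (hθ : ∀ v ∈ rootSpace t 0, IsTwoNilpotent p (v - θ v)) {ε ε' : F2Cube} (hε : ε ≠ 0)
    (hε' : ε' ≠ 0) :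
    Module.finrank F (rootSpace t (weight α β γ ε)) =
      Module.finrank F (rootSpace t (weight α β γ ε')) := by
  refine F2Cube.eq_of_forall_exists_dot_eq_one
    (f := fun ε => Module.finrank F (rootSpace t (weight α β γ ε))) (fun σ hσ χ hχ => ?_) hε hε'
  obtain ⟨η, hη, x, hx, hσx⟩ :=
    hT.exists_apply_map_ne_zero hp hsimple hdim1 hθt hχ (hT.weight_ne_zero hσ)
  refine ⟨η, hη, fun hση => ?_, ?_⟩
  · obtain rfl : η = σ := add_left_cancel (hση.trans (F2Cube.add_self σ).symm)
    exact hσx (apply_map_eq_zero hp hθ hx)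
  · rw [weight_add]
    exact (finrank_rootSpace_eq_of_apply_map_ne_zero hp hθ hx hσx).symm

lemma exists_weight_eq_of_mem {F : Type*} [Field F] [CharP F 2] {g : Type*} [LieRing g]
    [LieAlgebra F g] {t : LieSubalgebra F g} {α β γ ξ : Module.Dual F t}
    (hξ : ξ ∈ ({α, β, γ, α + β, α + γ, β + γ, α + β + γ} : Set (Module.Dual F t))) :
    ∃ ε ≠ 0, weight α β γ ε = ξ := by
  simp only [Set.mem_insert_iff, Set.mem_singleton_iff] at hξ
  rcases hξ with rfl | rfl | rfl | rfl | rfl | rfl | rfl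
  exacts [⟨(1, 0, 0), by decide, by simp [weight]⟩, ⟨(0, 1, 0), by decide, by simp [weight]⟩,
    ⟨(0, 0, 1), by decide, by simp [weight]⟩, ⟨(1, 1, 0), by decide, by simp [weight]⟩,
    ⟨(1, 0, 1), by decide, by simp [weight]⟩, ⟨(0, 1, 1), by decide, by simp [weight]⟩,
    ⟨(1, 1, 1), by decide, by simp [weight]⟩]

theorem statement18_general
    {F : Type*} [Field F] [CharP F 2]
    {g : Type*} [LieRing g] [LieAlgebra F g] [FiniteDimensional F g]
    (p : g → g) (hp : IsTwoMap F p)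
    (hdim1 : Module.finrank F g ≠ 1)
    (hsimple : ∀ I : LieIdeal F g, I = ⊥ ∨ I = ⊤)
    (t : LieSubalgebra F g)
    (n : Submodule F g)
    (hn : ∀ x : g, x ∈ n ↔ x ∈ rootSpace t 0 ∧ IsTwoNilpotent p x)
    (hdecomp : rootSpace t 0 = t.toSubmodule ⊔ n)
    (hdisj : Disjoint t.toSubmodule n)
    (t₁ t₂ t₃ : t)
    (htor1 : p (t₁ : g) = (t₁ : g)) (htor2 : p (t₂ : g) = (t₂ : g))
    (htor3 : p (t₃ : g) = (t₃ : g))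
    (hspan : Submodule.span F ({t₁, t₂, t₃} : Set t) = ⊤)
    (α β γ : Module.Dual F t)
    (hα : α t₁ = 1 ∧ α t₂ = 0 ∧ α t₃ = 0)
    (hβ : β t₁ = 0 ∧ β t₂ = 1 ∧ β t₃ = 0)
    (hγ : γ t₁ = 0 ∧ γ t₂ = 0 ∧ γ t₃ = 1)
    : ∀ ξ ∈ ({α, β, γ, α + β, α + γ, β + γ, α + β + γ} : Set (Module.Dual F t)),
      ∀ σ ∈ ({α, β, γ, α + β, α + γ, β + γ, α + β + γ} : Set (Module.Dual F t)),
        Module.finrank F (rootSpace t ξ) = Module.finrank F (rootSpace t σ) := by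
  have hab : ∀ x y : t, ⁅(x : g), (y : g)⁆ = 0 := fun x y => by
    simpa using (hdecomp ▸ Submodule.mem_sup_left y.2 : (y : g) ∈ rootSpace t 0) x
  have hT : IsToralBasis p t₁ t₂ t₃ α β γ := ⟨hab, htor1, htor2, htor3, hspan, hα, hβ, hγ⟩
  obtain ⟨θ, hθt, hθn⟩ := Submodule.exists_linearMap_sub_mem_of_eq_sup hdecomp hdisj
  have hθ : ∀ v ∈ rootSpace t 0, IsTwoNilpotent p (v - θ v) := fun v hv =>
    ((hn _).mp (hθn v hv)).2
  intro ξ hξ σ hσ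
  obtain ⟨ε, hε, rfl⟩ := exists_weight_eq_of_mem hξ
  obtain ⟨ε', hε', rfl⟩ := exists_weight_eq_of_mem hσ
  exact hT.finrank_rootSpace_weight_eq hp hsimple hdim1 hθt hθ hε hε'

/-- in a simple Lie 2-algebra of toral rank 3 with a standard
(triangulable) maximal torus, all root spaces attached to the nonzero elements of `t*`
have the same dimension. -/
theorem statement18
    {F : Type*} [Field F] [IsAlgClosed F] [CharP F 2]
    {g : Type*} [LieRing g] [LieAlgebra F g] [FiniteDimensional F g]
    (p : g → g) (hp : IsTwoMap F p)
    (hdim1 : Module.finrank F g ≠ 1)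
    (hsimple : ∀ I : LieIdeal F g, I = ⊥ ∨ I = ⊤)
    (t : LieSubalgebra F g) (hmax : IsMaxTorus F p t)
    (n : Submodule F g)
    (hn : ∀ x : g, x ∈ n ↔ x ∈ rootSpace t 0 ∧ IsTwoNilpotent p x)
    (hstd : ∀ x ∈ rootSpace t 0, ∀ y ∈ n, ⁅x, y⁆ ∈ n)
    (hdecomp : rootSpace t 0 = t.toSubmodule ⊔ n)
    (hdisj : Disjoint t.toSubmodule n)
    (hrank : ∀ s : LieSubalgebra F g, IsTorus F p s → Module.finrank F s ≤ 3)
    (hdimt : Module.finrank F t = 3)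
    (t₁ t₂ t₃ : t)
    (htor1 : p (t₁ : g) = (t₁ : g)) (htor2 : p (t₂ : g) = (t₂ : g))
    (htor3 : p (t₃ : g) = (t₃ : g))
    (hspan : Submodule.span F ({t₁, t₂, t₃} : Set t) = ⊤)
    (α β γ : Module.Dual F t)
    (hα : α t₁ = 1 ∧ α t₂ = 0 ∧ α t₃ = 0)
    (hβ : β t₁ = 0 ∧ β t₂ = 1 ∧ β t₃ = 0)
    (hγ : γ t₁ = 0 ∧ γ t₂ = 0 ∧ γ t₃ = 1)
    : ∀ ξ ∈ ({α, β, γ, α + β, α + γ, β + γ, α + β + γ} : Set (Module.Dual F t)),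
      ∀ σ ∈ ({α, β, γ, α + β, α + γ, β + γ, α + β + γ} : Set (Module.Dual F t)),
        Module.finrank F (rootSpace t ξ) = Module.finrank F (rootSpace t σ) :=
  statement18_general p hp hdim1 hsimple t n hn hdecomp hdisj t₁ t₂ t₃ htor1 htor2 htor3 hspan α β γ
    hα hβ hγ
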